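/- Two positive paths in the arrangement graph G(A) that are equivalent in the category of positive paths G⁺(A) cross every hyperplane of A the same number of times. -/

import Mathlib

open scoped Classical
noncomputable section

/-- Ambient real vector space `ℝ^d`. -/
abbrev EucV (d : ℕ) := Fin d → ℝ

/-- The complement of the arrangement given by the kernels of the linear forms in `A`. -/
def hypCompl {d : ℕ} (A : Finset (EucV d →ₗ[ℝ] ℝ)) : Set (EucV d) :=
  {x | ∀ f ∈ A, f x ≠ 0}

/-- A chamber of the arrangement: a connected component of the complement. -/
def IsChamber {d : ℕ} (A : Finset (EucV d →ₗ[ℝ] ℝ)) (C : Set (EucV d)) : Prop :=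
  ∃ x ∈ hypCompl A, C = connectedComponentIn (hypCompl A) x

/-- The hyperplane `ker f` separates `C` from `C'`. -/
def SepBy {d : ℕ} (f : EucV d →ₗ[ℝ] ℝ) (C C' : Set (EucV d)) : Prop :=
  ∃ x ∈ C, ∃ y ∈ C', f x * f y < 0

/-- The set `S(C,C')` of hyperplanes of `A` separating `C` from `C'`. -/
def sepSet {d : ℕ} (A : Finset (EucV d →ₗ[ℝ] ℝ)) (C C' : Set (EucV d)) :
    Set (EucV d →ₗ[ℝ] ℝ) :=
  {f | f ∈ A ∧ SepBy f C C'}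

/-- A positive path in the arrangement graph: a nonempty list of chambers in which
consecutive chambers are adjacent (separated by exactly one hyperplane). -/
def IsPosPath {d : ℕ} (A : Finset (EucV d →ₗ[ℝ] ℝ)) (l : List (Set (EucV d))) : Prop :=
  l ≠ [] ∧ (∀ C ∈ l, IsChamber A C) ∧ l.Chain' (fun C C' => (sepSet A C C').ncard = 1)

/-- A positive minimal path: its number of edges equals the number of hyperplanes
separating its endpoints. -/
def IsMinPath {d : ℕ} (A : Finset (EucV d →ₗ[ℝ] ℝ)) (l : List (Set (EucV d))) : Prop :=
  IsPosPath A l ∧ l.length = (sepSet A l.headI (l.getLast!)).ncard + 1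

/-- Equivalence of positive paths in the category `𝒢⁺(A)`: the congruence generated by
substituting a positive minimal subpath by another with the same endpoints. -/
inductive PathEquiv {d : ℕ} (A : Finset (EucV d →ₗ[ℝ] ℝ)) :
    List (Set (EucV d)) → List (Set (EucV d)) → Prop
  | subst (l₁ m m' l₂ : List (Set (EucV d))) :
      IsMinPath A m → IsMinPath A m' → m.headI = m'.headI → m.getLast! = m'.getLast! →
      IsPosPath A (l₁ ++ m ++ l₂) → PathEquiv A (l₁ ++ m ++ l₂) (l₁ ++ m' ++ l₂)
  | refl (l : List (Set (EucV d))) : PathEquiv A l l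
  | symm {l l' : List (Set (EucV d))} : PathEquiv A l l' → PathEquiv A l' l
  | trans {l l' l'' : List (Set (EucV d))} :
      PathEquiv A l l' → PathEquiv A l' l'' → PathEquiv A l l''

/-- The number of times a path crosses the hyperplane `ker f`. -/
def crossings {d : ℕ} (f : EucV d →ₗ[ℝ] ℝ) (l : List (Set (EucV d))) : ℕ :=
  ((l.zip l.tail).filter (fun p => decide (SepBy f p.1 p.2))).length

/-!
A hyperplane of `A` has constant sign on each chamber, so a path whose endpoints it separates
crosses it at least once. Every edge crosses exactly one hyperplane, so the total number of
crossings of a positive path is its number of edges; for a minimal path from `C` to `C'` this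
is `|S(C,C')|`, which forces it to cross each hyperplane of `S(C,C')` exactly once and no other.
Thus the crossing numbers of a minimal path depend only on its endpoints, and since crossing
numbers add up under concatenation, they are invariant under the substitutions generating
`PathEquiv`.
-/

section

variable {d : ℕ} {A : Finset (EucV d →ₗ[ℝ] ℝ)} {f : EucV d →ₗ[ℝ] ℝ}

lemma IsPreconnected.not_sepBy_self {s : Set (EucV d)} (hs : IsPreconnected s)
    (hf : ∀ x ∈ s, f x ≠ 0) : ¬SepBy f s s := by
  rintro ⟨x, hx, y, hy, hxy⟩
  have hzero : (0 : ℝ) ∈ Set.uIcc (f x) (f y) := by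
    rw [Set.mem_uIcc]
    rcases mul_neg_iff.mp hxy with ⟨h₁, h₂⟩ | ⟨h₁, h₂⟩
    · exact Or.inr ⟨h₂.le, h₁.le⟩
    · exact Or.inl ⟨h₁.le, h₂.le⟩
  have himage : IsPreconnected (f '' s) :=
    hs.image f f.continuous_of_finiteDimensional.continuousOn
  obtain ⟨z, hz, hfz⟩ := himage.ordConnected.uIcc_subset ⟨x, hx, rfl⟩ ⟨y, hy, rfl⟩ hzero
  exact hf z hz hfz

lemma SepBy.or_sepBy_of_mem {C C' C'' : Set (EucV d)} (h : SepBy f C C'') {y : EucV d}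
    (hy : y ∈ C') (hfy : f y ≠ 0) : SepBy f C C' ∨ SepBy f C' C'' := by
  obtain ⟨x, hx, z, hz, hxz⟩ := h
  rcases lt_or_ge (f x * f y) 0 with hxy | hxy
  · exact Or.inl ⟨x, hx, y, hy, hxy⟩
  · -- `(f x f y) (f y f z) = (f x f z) (f y)² < 0`
    have hprod : f x * f y * (f y * f z) < 0 := by
      have hfy2 : 0 < f y ^ 2 := by positivity
      nlinarith
    exact Or.inr ⟨y, hy, z, hz, neg_of_mul_neg_right hprod hxy⟩

namespace IsChamber

variable {C : Set (EucV d)}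

lemma subset_hypCompl (hC : IsChamber A C) : C ⊆ hypCompl A := by
  obtain ⟨x, -, rfl⟩ := hC
  exact connectedComponentIn_subset _ _

lemma nonempty (hC : IsChamber A C) : C.Nonempty := by
  obtain ⟨x, hx, rfl⟩ := hC
  exact ⟨x, mem_connectedComponentIn hx⟩

lemma not_sepBy_self (hC : IsChamber A C) (hf : f ∈ A) : ¬SepBy f C C := by
  refine IsPreconnected.not_sepBy_self ?_ fun x hx => hC.subset_hypCompl hx f hf
  obtain ⟨x, -, rfl⟩ := hC
  exact isPreconnected_connectedComponentIn

lemma sepBy_or_sepBy (hC : IsChamber A C) {C₁ C₂ : Set (EucV d)} (hf : f ∈ A)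
    (h : SepBy f C₁ C₂) : SepBy f C₁ C ∨ SepBy f C C₂ := by
  obtain ⟨y, hy⟩ := hC.nonempty
  exact h.or_sepBy_of_mem hy (hC.subset_hypCompl hy f hf)

end IsChamber

lemma crossings_singleton (C : Set (EucV d)) : crossings f [C] = 0 := rfl

lemma crossings_cons_cons (C C' : Set (EucV d)) (l : List (Set (EucV d))) :
    crossings f (C :: C' :: l) = (if SepBy f C C' then 1 else 0) + crossings f (C' :: l) := by
  by_cases h : SepBy f C C' <;> simp [crossings, h, Nat.add_comm]

lemma crossings_append_cons (l : List (Set (EucV d))) (C : Set (EucV d))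
    (l' : List (Set (EucV d))) :
    crossings f (l ++ C :: l') = crossings f (l ++ [C]) + crossings f (C :: l') := by
  induction l with
  | nil => simp [crossings_singleton]
  | cons C₀ l ih =>
    cases l with
    | nil => simp [crossings_cons_cons, crossings_singleton]
    | cons C₁ l => simp only [List.cons_append, crossings_cons_cons] at ih ⊢; omega

lemma crossings_append_of_ne_nil (l : List (Set (EucV d))) {m : List (Set (EucV d))}
    (hm : m ≠ []) : crossings f (l ++ m) = crossings f (l ++ [m.headI]) + crossings f m := by
  obtain ⟨C, m, rfl⟩ := List.exists_cons_of_ne_nil hm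
  exact crossings_append_cons l C m

lemma crossings_append_append (l₁ l₂ : List (Set (EucV d))) {m : List (Set (EucV d))}
    (hm : m ≠ []) : crossings f (l₁ ++ m ++ l₂) =
      crossings f (l₁ ++ [m.headI]) + crossings f m + crossings f (m.getLast! :: l₂) := by
  obtain ⟨m, C, rfl⟩ := (List.eq_nil_or_concat m).resolve_left hm
  rw [List.concat_eq_append] at hm ⊢
  rw [List.append_assoc, List.append_assoc, List.singleton_append, ← List.append_assoc,
    crossings_append_cons, List.append_assoc, crossings_append_of_ne_nil _ hm]
  simp

lemma ncard_sepSet (C C' : Set (EucV d)) :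
    (sepSet A C C').ncard = (A.filter (SepBy · C C')).card := by
  rw [← Set.ncard_coe_finset, Finset.coe_filter]
  rfl

lemma sum_crossings_of_isChain :
    ∀ {l : List (Set (EucV d))}, l.IsChain (fun C C' => (sepSet A C C').ncard = 1) →
      ∑ f ∈ A, crossings f l = l.length - 1
  | [], _ => by simp [crossings]
  | [C], _ => by simp [crossings_singleton]
  | C :: C' :: l, hl => by
    rw [List.isChain_cons_cons] at hl
    have hedge : ∑ f ∈ A, (if SepBy f C C' then 1 else 0) = 1 := by
      rw [← Finset.card_filter, ← ncard_sepSet, hl.1]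
    simp only [crossings_cons_cons, Finset.sum_add_distrib, hedge,
      sum_crossings_of_isChain hl.2, List.length_cons]
    omega

lemma one_le_crossings_of_sepBy (hf : f ∈ A) :
    ∀ {C : Set (EucV d)} {l : List (Set (EucV d))}, (∀ C' ∈ C :: l, IsChamber A C') →
      SepBy f C (C :: l).getLast! → 1 ≤ crossings f (C :: l)
  | C, [], hl, h => absurd (by simpa using h) ((hl C (by simp)).not_sepBy_self hf)
  | C, C' :: l, hl, h => by
    rw [crossings_cons_cons]
    have hC' : IsChamber A C' := hl C' (by simp)
    rcases hC'.sepBy_or_sepBy hf (by simpa using h) with hCC' | hrest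
    · simp [hCC']
    · have := one_le_crossings_of_sepBy hf (C := C') (l := l)
        (fun C'' hC'' => hl C'' (List.mem_cons_of_mem C hC'')) (by simpa using hrest)
      omega

lemma IsMinPath.crossings_eq {m : List (Set (EucV d))} (hm : IsMinPath A m) (hf : f ∈ A) :
    crossings f m = if SepBy f m.headI m.getLast! then 1 else 0 := by
  obtain ⟨⟨hne, hch, hchain⟩, hlen⟩ := hm
  have hle : ∀ g ∈ A, (if SepBy g m.headI m.getLast! then 1 else 0) ≤ crossings g m := by
    intro g hg
    split_ifs with hs
    · obtain ⟨C, l, rfl⟩ := List.exists_cons_of_ne_nil hne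
      exact one_le_crossings_of_sepBy hg hch hs
    · exact Nat.zero_le _
  have hsum :
      ∑ g ∈ A, (if SepBy g m.headI m.getLast! then 1 else 0) = ∑ g ∈ A, crossings g m := by
    rw [← Finset.card_filter, ← ncard_sepSet, sum_crossings_of_isChain hchain, hlen,
      Nat.add_sub_cancel]
  exact ((Finset.sum_eq_sum_iff_of_le hle).mp hsum f hf).symm

lemma crossings_subst_minPath (l₁ l₂ : List (Set (EucV d))) {m m' : List (Set (EucV d))}
    (hm : IsMinPath A m) (hm' : IsMinPath A m') (hhead : m.headI = m'.headI)
    (hlast : m.getLast! = m'.getLast!) (hf : f ∈ A) :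
    crossings f (l₁ ++ m ++ l₂) = crossings f (l₁ ++ m' ++ l₂) := by
  rw [crossings_append_append l₁ l₂ hm.1.1, crossings_append_append l₁ l₂ hm'.1.1,
    hm.crossings_eq hf, hm'.crossings_eq hf, hhead, hlast]

end

theorem equiv_paths_same_crossings_general {d : ℕ} (A : Finset (EucV d →ₗ[ℝ] ℝ))
    (l l' : List (Set (EucV d)))
    (h : PathEquiv A l l') :
    ∀ f ∈ A, crossings f l = crossings f l' := by
  induction h with
  | subst l₁ m m' l₂ hm hm' hhead hlast _ =>
    exact fun f hf => crossings_subst_minPath l₁ l₂ hm hm' hhead hlast hf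
  | refl l => exact fun _ _ => rfl
  | symm _ ih => exact fun f hf => (ih f hf).symm
  | trans _ _ ih₁ ih₂ => exact fun f hf => (ih₁ f hf).trans (ih₂ f hf)

/-- Two positive paths that are equivalent in the category of positive paths `𝒢⁺(A)`
cross every hyperplane of `A` the same number of times. -/
theorem equiv_paths_same_crossings {d : ℕ} (A : Finset (EucV d →ₗ[ℝ] ℝ))
    (hA : ∀ f ∈ A, f ≠ 0) (l l' : List (Set (EucV d)))
    (hl : IsPosPath A l) (hl' : IsPosPath A l')
    (h : PathEquiv A l l') :
    ∀ f ∈ A, crossings f l = crossings f l' :=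
  equiv_paths_same_crossings_general A l l' h
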